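/- arXiv:2411.19944 — 7 statements merged into one kernel-verified Lean document; each statement's English description precedes it below -/
import Mathlib

section
/- Let n ≥ 1, let S_1, ..., S_n be sets with |S_i| ≥ ℵ_{i-1} for each i ∈ [n], let R be a ring, and for each i ∈ {1,...,n} let v_i be a function from ∏_{j≠i} S_j to the set of finitely supported functions ∏_{j∈[n]} S_j → R. Then there exists an element s ∈ ∏_{i∈[n]} S_i such that for every i, v_i(p_i(s))(s) = 0, where p_i(s) deletes the i-th coordinate of s. -/
open Cardinal

private lemma union_lt_aleph {n : ℕ} {ι α : Type u} (hι : #ι < Cardinal.aleph n)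
    (f : ι → Set α) (hf : ∀ i, (f i).Finite) : #(⋃ i, f i) < Cardinal.aleph n := by
  by_cases h : #ι < ℵ₀
  · have : Finite ι := Cardinal.lt_aleph0_iff_finite.mp h
    exact lt_of_lt_of_le (Set.finite_iUnion hf).lt_aleph0 (Cardinal.aleph0_le_aleph _)
  · push_neg at h
    calc #(⋃ i, f i) ≤ Cardinal.sum fun i => #(f i) := Cardinal.mk_iUnion_le_sum_mk
      _ ≤ Cardinal.sum fun _ : ι => ℵ₀ :=
          Cardinal.sum_le_sum _ _ fun i => ((hf i).lt_aleph0).le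
      _ = #ι * ℵ₀ := Cardinal.sum_const' _ _
      _ = #ι := Cardinal.mul_eq_left h h Cardinal.aleph0_ne_zero
      _ < _ := hι

private lemma pi_lt_aleph {n : ℕ} {T : Fin n → Type u}
    (hT : ∀ j : Fin n, #(T j) = Cardinal.aleph (j : ℕ)) :
    #(∀ j, T j) < Cardinal.aleph n := by
  cases n with
  | zero =>
    have h1 : #(∀ j : Fin 0, T j) = 1 := Cardinal.mk_eq_one _
    rw [h1]
    exact lt_of_lt_of_le Cardinal.one_lt_aleph0 (Cardinal.aleph0_le_aleph _)
  | succ m =>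
    have h1 : #(∀ j, T j) ≤ Cardinal.aleph m := by
      rw [Cardinal.mk_pi]
      calc Cardinal.prod (fun j => #(T j))
          ≤ Cardinal.prod (fun _ : Fin (m+1) => Cardinal.aleph m) := by
            apply Cardinal.prod_le_prod
            intro j
            rw [hT j]
            exact Cardinal.aleph_le_aleph.mpr (by exact_mod_cast Nat.lt_succ_iff.mp j.isLt)
        _ = Cardinal.lift.{0} (Cardinal.aleph m) ^ Cardinal.lift (#(Fin (m+1))) :=
            Cardinal.prod_const _ _
        _ = Cardinal.aleph m ^ ((m+1 : ℕ) : Cardinal) := by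
            rw [Cardinal.lift_uzero, Cardinal.mk_fin, Cardinal.lift_natCast]
        _ ≤ Cardinal.aleph m := by
            rw [Cardinal.power_natCast]
            exact Cardinal.power_nat_le (Cardinal.aleph0_le_aleph _)
    exact h1.trans_lt (Cardinal.aleph_lt_aleph.mpr (by exact_mod_cast Nat.lt_succ_self m))

/-- Let `S 0, ..., S (n-1)` be sets with `#(S i) ≥ ℵ_i`
(i.e. `|S_i| ≥ ℵ_{i-1}` for `i ∈ {1,...,n}` in 1-based indexing), `R` a ring, and for each `i`
let `v i` be a function from `∏_{j ≠ i} S j` to the finitely supported functions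
`(∏ j, S j) → R`.  Then there exists `s ∈ ∏ j, S j` with `v i (p_i s) s = 0` for all `i`,
where `p_i` deletes the `i`-th coordinate. -/
theorem stmt0 {n : ℕ} (S : Fin n → Type*) (R : Type*) [Ring R]
    (hS : ∀ i : Fin n, Cardinal.aleph (i : ℕ) ≤ Cardinal.mk (S i))
    (v : ∀ i : Fin n, ((∀ j : {j : Fin n // j ≠ i}, S j) → ((∀ j, S j) → R)))
    (hfin : ∀ (i : Fin n) (x : ∀ j : {j : Fin n // j ≠ i}, S j),
      (Function.support (v i x)).Finite) :
    ∃ s : ∀ j, S j, ∀ i : Fin n, v i (fun j => s j) s = 0 := by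
  induction n with
  | zero => exact ⟨fun j => j.elim0, fun i => i.elim0⟩
  | succ n IH =>
    -- choose subsets T j of S (castSucc j) of cardinality exactly ℵ_j
    have hT : ∀ j : Fin n, ∃ T : Set (S j.castSucc), #T = Cardinal.aleph (j : ℕ) := by
      intro j
      exact Cardinal.le_mk_iff_exists_set.mp (by simpa using hS j.castSucc)
    choose T hTcard using hT
    -- restriction of a tuple in ∏ T to a tuple missing the last coordinate
    let res : (∀ j : Fin n, T j) → (∀ j : {j : Fin (n+1) // j ≠ Fin.last n}, S j) :=
      fun t j => Fin.lastCases (motive := fun m => m ≠ Fin.last n → S m)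
        (fun h => absurd rfl h) (fun k _ => (t k : S k.castSucc)) j.1 j.2
    -- the set of "bad" last coordinates
    let B : Set (S (Fin.last n)) :=
      ⋃ t : ∀ j : Fin n, T j, (fun u : ∀ j : Fin (n+1), S j => u (Fin.last n)) ''
        Function.support (v (Fin.last n) (res t))
    have hBcard : #B < #(S (Fin.last n)) := by
      have h1 : #B < Cardinal.aleph n :=
        union_lt_aleph (pi_lt_aleph hTcard) _ (fun t => (hfin _ _).image _)
      refine h1.trans_le ?_
      simpa using hS (Fin.last n)
    obtain ⟨a, ha⟩ : ∃ a, a ∉ B := by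
      by_contra hcon
      push_neg at hcon
      have : B = Set.univ := Set.eq_univ_of_forall hcon
      rw [this, Cardinal.mk_univ] at hBcard
      exact lt_irrefl _ hBcard
    -- extending a tuple in ∏ T by a in the last coordinate
    let scons : (∀ j : Fin n, T j) → (∀ j : Fin (n+1), S j) :=
      fun t j => Fin.lastCases (motive := fun m => S m) a (fun k => (t k : S k.castSucc)) j
    have hsconsinj : Function.Injective scons := by
      intro t t' h
      funext k
      have := congrFun h k.castSucc
      simp only [scons, Fin.lastCases_castSucc] at this
      exact Subtype.ext this
    -- extending a restricted tuple by a in the last coordinate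
    let E : ∀ i : Fin n, (∀ j : {j : Fin n // j ≠ i}, T j) →
        (∀ j : {j : Fin (n+1) // j ≠ i.castSucc}, S j) :=
      fun i x j => Fin.lastCases (motive := fun m => m ≠ i.castSucc → S m)
        (fun _ => a)
        (fun k hk => (x ⟨k, fun he => hk (congrArg Fin.castSucc he)⟩ : S k.castSucc)) j.1 j.2
    let w : ∀ i : Fin n, (∀ j : {j : Fin n // j ≠ i}, T j) → ((∀ j, T j) → R) :=
      fun i x t => v i.castSucc (E i x) (scons t)
    have hwfin : ∀ (i : Fin n) (x : ∀ j : {j : Fin n // j ≠ i}, T j),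
        (Function.support (w i x)).Finite := by
      intro i x
      exact Set.Finite.preimage hsconsinj.injOn (hfin i.castSucc (E i x))
    obtain ⟨t, ht⟩ := IH (fun j => T j) (fun j => (hTcard j).ge) w hwfin
    refine ⟨scons t, ?_⟩
    intro i
    induction i using Fin.lastCases with
    | last =>
      by_contra hne
      apply ha
      have heq : (fun j : {j : Fin (n+1) // j ≠ Fin.last n} => scons t j) = res t := by
        funext j
        obtain ⟨jv, hj⟩ := j
        induction jv using Fin.lastCases with
        | last => exact absurd rfl hj
        | cast k => simp [scons, res]
      rw [heq] at hne
      refine Set.mem_iUnion.mpr ⟨t, ⟨scons t, hne, ?_⟩⟩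
      simp [scons]
    | cast i₀ =>
      have h0 := ht i₀
      have heq : E i₀ (fun j => t j) = fun j : {j : Fin (n+1) // j ≠ i₀.castSucc} => scons t j := by
        funext j
        obtain ⟨jv, hj⟩ := j
        induction jv using Fin.lastCases with
        | last => simp [scons, E]
        | cast k => simp [scons, E]
      have : v i₀.castSucc (fun j : {j : Fin (n+1) // j ≠ i₀.castSucc} => scons t j) (scons t)
          = w i₀ (fun j => t j) t := by
        show _ = v i₀.castSucc (E i₀ (fun j => t j)) (scons t)
        rw [heq]
      rw [this]
      exact h0
end

section
/- Let n = 2: let S₁, S₂ be sets with |S₁| ≥ ℵ₀ and |S₂| ≥ ℵ₁, R a ring, and let v₁ : S₂ → Hom^fin(S₁ × S₂, R) and v₂ : S₁ → Hom^fin(S₁ × S₂, R) be arbitrary functions. Then there exists (s₁, s₂) ∈ S₁ × S₂ such that v₁(s₂)(s₁, s₂) = 0 and v₂(s₁)(s₁, s₂) = 0. -/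
open Cardinal in
/-- If `|S₁| ≥ ℵ₀`, `|S₂| ≥ ℵ₁`, and `v₁ : S₂ → Hom^fin(S₁ × S₂, R)`,
`v₂ : S₁ → Hom^fin(S₁ × S₂, R)` are arbitrary functions (with finite support values),
then there is `(s₁, s₂)` with `v₁ s₂ (s₁, s₂) = 0` and `v₂ s₁ (s₁, s₂) = 0`. -/
theorem stmt1 (S₁ S₂ R : Type*) [Ring R]
    (h₁ : ℵ₀ ≤ Cardinal.mk S₁) (h₂ : Cardinal.aleph 1 ≤ Cardinal.mk S₂)
    (v₁ : S₂ → (S₁ × S₂ → R)) (v₂ : S₁ → (S₁ × S₂ → R))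
    (hv₁ : ∀ t, (Function.support (v₁ t)).Finite)
    (hv₂ : ∀ t, (Function.support (v₂ t)).Finite) :
    ∃ s : S₁ × S₂, v₁ s.2 s = 0 ∧ v₂ s.1 s = 0 := by
  have hinf : Infinite S₁ := Cardinal.aleph0_le_mk_iff.mp h₁
  let f : ℕ ↪ S₁ := Infinite.natEmbedding S₁
  set T : Set S₂ := ⋃ n : ℕ, Prod.snd '' (Function.support (v₂ (f n))) with hT
  have hTc : T.Countable :=
    Set.countable_iUnion fun n => ((hv₂ (f n)).image _).countable
  have hne : Tᶜ.Nonempty := by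
    by_contra h
    rw [Set.not_nonempty_iff_eq_empty, Set.compl_empty_iff] at h
    have : Cardinal.mk S₂ ≤ ℵ₀ := by
      have := hTc.le_aleph0
      rwa [h, Cardinal.mk_univ] at this
    exact absurd (h₂.trans this) (not_le.mpr (Cardinal.aleph0_lt_aleph_one))
  obtain ⟨s₂, hs₂⟩ := hne
  set F : Set S₁ := Prod.fst '' (Function.support (v₁ s₂)) with hF
  have hFfin : F.Finite := (hv₁ s₂).image _
  have hrange : (Set.range (f : ℕ → S₁)).Infinite :=
    Set.infinite_range_of_injective f.injective
  obtain ⟨s₁, hs₁r, hs₁F⟩ := (hrange.diff hFfin).nonempty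
  obtain ⟨n, rfl⟩ := hs₁r
  refine ⟨(f n, s₂), ?_, ?_⟩
  · by_contra h
    exact hs₁F ⟨(f n, s₂), h, rfl⟩
  · by_contra h
    exact hs₂ (Set.mem_iUnion.mpr ⟨n, ⟨(f n, s₂), h, rfl⟩⟩)
end

section
/- Let R be a ring, S a set, and {e_s}_{s∈S} a family of pairwise orthogonal idempotents in R (e_s e_t = 0 for s ≠ t, e_s² = e_s). Define Ψ : S → R by Ψ(s) = 1 − e_s. Then the R-linear map Ψ_{R,S} : ⊕_S R → R ⊕ (⊕_S R), sending the basis vector 1_s to (1, Ψ(s)·1_s), is injective. -/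
/-- Let `R` be a ring, `S` a set and `{e s}` pairwise orthogonal idempotents.
With `Ψ s = 1 - e s`, the `R`-linear map `Ψ_{R,S} : ⊕_S R → R ⊕ (⊕_S R)`,
`1_s ↦ (1, Ψ s • 1_s)` — concretely `f ↦ (∑ s, f s, fun s => (1 - e s) * f s)` — is injective. -/
theorem stmt2 (R : Type*) [CommRing R] (S : Type*) (e : S → R)
    (hidem : ∀ s, e s * e s = e s)
    (horth : ∀ s t, s ≠ t → e s * e t = 0) :
    Function.Injective (fun f : S →₀ R =>
      ((f.sum fun _ r => r, fun s => (1 - e s) * f s) : R × (S → R))) := by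
  classical
  intro f g hfg
  have h1 : (f.sum fun _ r => r) = (g.sum fun _ r => r) := congrArg Prod.fst hfg
  have h2 : ∀ s, (1 - e s) * f s = (1 - e s) * g s := fun s =>
    congrFun (congrArg Prod.snd hfg) s
  have key : ∀ s, f s - g s = e s * (f s - g s) := by
    intro s
    linear_combination h2 s
  set A := f.support ∪ g.support with hA
  have hfA : ∑ s ∈ A, f s = f.sum fun _ r => r := by
    rw [Finsupp.sum_of_support_subset f Finset.subset_union_left _ (fun _ _ => rfl)]
  have hgA : ∑ s ∈ A, g s = g.sum fun _ r => r := by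
    rw [Finsupp.sum_of_support_subset g Finset.subset_union_right _ (fun _ _ => rfl)]
  have hsum : ∑ s ∈ A, (f s - g s) = 0 := by
    rw [Finset.sum_sub_distrib, hfA, hgA, h1, sub_self]
  ext t
  have ht : f t - g t = 0 := by
    by_cases htA : t ∈ A
    · have : e t * ∑ s ∈ A, (f s - g s) = f t - g t := by
        rw [Finset.mul_sum]
        rw [Finset.sum_eq_single t]
        · rw [← key t]
        · intro s hs hst
          rw [key s, ← mul_assoc, horth t s (Ne.symm hst), zero_mul]
        · intro h; exact absurd htA h
      rw [hsum, mul_zero] at this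
      exact this.symm
    · have hf : f t = 0 := Finsupp.notMem_support_iff.mp fun h =>
        htA (Finset.mem_union_left _ h)
      have hg : g t = 0 := Finsupp.notMem_support_iff.mp fun h =>
        htA (Finset.mem_union_right _ h)
      rw [hf, hg, sub_self]
  exact sub_eq_zero.mp ht
end

section
/- Let k be a field and Ψ : k → k[x], Ψ(a) = x − a. Then the cokernel of the k[x]-linear map Ψ_{k[x],k} : ⊕_{a∈k} k[x] → k[x] ⊕ (⊕_{a∈k} k[x]) (sending 1_a to (1, (x−a)·1_a)) is a flat k[x]-module; equivalently, Ψ_{k[x],k} is universally injective. -/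
/-! Over a principal ideal domain flat means torsion-free, so it suffices that `r • m` lying in the
range of `Ψ_{R,S}` forces `m` into it; by unique factorisation only prime `r = p` matter. If
`Ψ_{R,S} c = p • m`, then `p ∣ Ψ a * c a` for every `a`. As the `Ψ a = x - a` are pairwise
coprime, `p` divides at most one of them, so `p ∣ c a` for all but at most one `a`, and
`p ∣ ∑ c a` settles the remaining one. Thus `c = p • d`, and `m = Ψ_{R,S} d` by cancelling `p`. -/

open Polynomial Function

/-- The `R`-linear map `Ψ_{R,S} : ⊕_S R → R ⊕ (⊕_S R)` associated to a function `Ψ : S → R`,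
sending the basis vector `1_s` to `(1, Ψ s • 1_s)`. -/
noncomputable def psiMap (R : Type*) [CommRing R] (S : Type*) (Ψ : S → R) :
    (S →₀ R) →ₗ[R] R × (S →₀ R) :=
  Finsupp.lsum R fun s => LinearMap.prod LinearMap.id ((Ψ s) • Finsupp.lsingle s)

section PsiMap

variable {R S : Type*} [CommRing R] {Ψ : S → R}

theorem psiMap_single (s : S) (r : R) :
    psiMap R S Ψ (Finsupp.single s r) = (r, Finsupp.single s (Ψ s * r)) := by
  simp [psiMap]

theorem psiMap_fst (c : S →₀ R) : (psiMap R S Ψ c).1 = c.sum fun _ t => t := by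
  simp [psiMap, Finsupp.sum, Prod.fst_sum]

theorem psiMap_snd (c : S →₀ R) (a : S) : (psiMap R S Ψ c).2 a = Ψ a * c a := by
  induction c using Finsupp.induction_linear with
  | zero => simp
  | add f g hf hg => simp [hf, hg, mul_add]
  | single b r =>
    classical
    by_cases h : b = a <;> simp [psiMap_single, h]

theorem Finsupp.exists_eq_smul_of_forall_dvd {p : R} {c : S →₀ R} (h : ∀ a, p ∣ c a) :
    ∃ d : S →₀ R, c = p • d := by
  choose q hq using h
  refine ⟨c.sum fun a _ => Finsupp.single a (q a), ?_⟩
  conv_lhs => rw [← c.sum_single]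
  simp only [Finsupp.smul_sum, Finsupp.smul_single, smul_eq_mul, ← hq]
  rfl

theorem dvd_apply_of_psiMap_eq_smul (hΨ : Pairwise (IsCoprime on Ψ)) {p : R} (hp : Prime p)
    {c : S →₀ R} {m : R × (S →₀ R)} (h : psiMap R S Ψ c = p • m) (a : S) : p ∣ c a := by
  have hsnd : ∀ b, p ∣ Ψ b ∨ p ∣ c b := fun b =>
    hp.dvd_or_dvd ⟨m.2 b, by rw [← psiMap_snd, h]; rfl⟩
  have hsum : p ∣ c.sum fun _ t => t := ⟨m.1, by rw [← psiMap_fst, h]; rfl⟩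
  by_contra hca
  have hΨa : p ∣ Ψ a := (hsnd a).resolve_right hca
  have herase : p ∣ (c.erase a).sum fun _ t => t := by
    refine Finset.dvd_sum fun b hb => ?_
    have hba : b ≠ a := by rintro rfl; simp at hb
    rw [Finsupp.erase_ne hba]
    exact (hsnd b).resolve_left fun hΨb => hp.not_isUnit ((hΨ hba).isUnit_of_dvd' hΨb hΨa)
  rw [← Finsupp.add_sum_erase' c a _ fun _ => rfl] at hsum
  exact hca ((dvd_add_left herase).mp hsum)

variable [IsDomain R]

theorem mem_range_psiMap_of_prime_smul_mem (hΨ : Pairwise (IsCoprime on Ψ)) {p : R}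
    (hp : Prime p) {m : R × (S →₀ R)} (h : p • m ∈ LinearMap.range (psiMap R S Ψ)) :
    m ∈ LinearMap.range (psiMap R S Ψ) := by
  obtain ⟨c, hc⟩ := h
  obtain ⟨d, rfl⟩ := Finsupp.exists_eq_smul_of_forall_dvd (dvd_apply_of_psiMap_eq_smul hΨ hp hc)
  rw [map_smul] at hc
  exact ⟨d, smul_right_injective _ hp.ne_zero hc⟩

theorem mem_range_psiMap_of_smul_mem [UniqueFactorizationMonoid R]
    (hΨ : Pairwise (IsCoprime on Ψ)) {r : R} (hr : r ≠ 0) {m : R × (S →₀ R)}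
    (h : r • m ∈ LinearMap.range (psiMap R S Ψ)) : m ∈ LinearMap.range (psiMap R S Ψ) := by
  induction r using UniqueFactorizationMonoid.induction_on_prime generalizing m with
  | h₁ => exact (hr rfl).elim
  | h₂ u hu => exact (Submodule.smul_mem_iff_of_isUnit _ hu).mp h
  | h₃ a p ha hp ih =>
    rw [mul_smul] at h
    exact ih ha (mem_range_psiMap_of_prime_smul_mem hΨ hp h)

theorem isTorsionFree_quotient_range_psiMap [UniqueFactorizationMonoid R]
    (hΨ : Pairwise (IsCoprime on Ψ)) :
    Module.IsTorsionFree R ((R × (S →₀ R)) ⧸ LinearMap.range (psiMap R S Ψ)) := by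
  refine .of_smul_eq_zero fun r x hx => or_iff_not_imp_left.mpr fun hr => ?_
  obtain ⟨m, rfl⟩ := Submodule.Quotient.mk_surjective _ x
  rw [← Submodule.Quotient.mk_smul, Submodule.Quotient.mk_eq_zero] at hx
  rw [Submodule.Quotient.mk_eq_zero]
  exact mem_range_psiMap_of_smul_mem hΨ hr hx

end PsiMap

/-- For a field `k` and `Ψ : k → k[x]`, `Ψ a = x - a`, the cokernel of
`Ψ_{k[x],k} : ⊕_{a ∈ k} k[x] → k[x] ⊕ (⊕_{a ∈ k} k[x])` is a flat `k[x]`-module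
(equivalently, `Ψ_{k[x],k}` is universally injective). -/
theorem stmt4 (k : Type*) [Field k] :
    Module.Flat (Polynomial k)
      ((Polynomial k × (k →₀ Polynomial k)) ⧸
        LinearMap.range (psiMap (Polynomial k) k (fun a => X - C a))) := by
  have hcoprime : Pairwise (IsCoprime on fun a : k => X - C a) :=
    pairwise_coprime_X_sub_C injective_id
  have := isTorsionFree_quotient_range_psiMap hcoprime
  infer_instance
end

section
/- Let R be a ring, S a set, and {e_s}_{s∈S} pairwise orthogonal idempotents in R. Set Ψ(s) = 1 − e_s. Then for every ring map f : R → R', the base change Ψ_{R,S} ⊗_R R' equals (f∘Ψ)_{R',S}; in particular Ψ_{R,S} is universally injective (its cokernel is R-flat). -/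
/-!
Tensoring `Ψ_{R,S}` with an `R`-module `N` gives `⊕_S N → N ⊕ ⊕_S N`,
`g ↦ (∑_s g_s, ((1 - e_s) g_s)_s)`, and this is injective: `(1 - e_s) g_s = 0` means
`g_s = e_s g_s`, so by orthogonality `g_t = e_t ∑_s g_s`, which vanishes when `∑_s g_s = 0`.
Over `R'` the map has the same shape, for the orthogonal idempotents `f (e_s)`. Since `Ψ_{R,S}`
stays injective after tensoring with every `R ⧸ I` and its target is free, a diagram chase
shows that its cokernel is flat.
-/

open TensorProduct LinearMap

section Flat

variable {R : Type*} [CommRing R] {F G M : Type*}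
  [AddCommGroup F] [AddCommGroup G] [AddCommGroup M]
  [Module R F] [Module R G] [Module R M] [Module.Flat R G]

theorem Module.Flat.of_exact_of_lTensor_quotient_injective (Ψ : F →ₗ[R] G) (π : G →ₗ[R] M)
    (hexact : Function.Exact Ψ π) (hπ : Function.Surjective π)
    (hΨ : ∀ I : Ideal R, Function.Injective (lTensor (R ⧸ I) Ψ)) :
    Module.Flat R M := by
  rw [Module.Flat.iff_rTensor_injective']
  intro I
  rw [injective_iff_map_eq_zero]
  intro x hx
  obtain ⟨y, rfl⟩ := lTensor_surjective I hπ x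
  have hy : lTensor R π (rTensor G I.subtype y) = 0 := by
    rwa [← LinearMap.comp_apply, lTensor_comp_rTensor, ← rTensor_comp_lTensor]
  obtain ⟨z, hz⟩ := (_root_.lTensor_exact R hexact hπ _).mp hy
  have hz_mod : rTensor F I.mkQ z = 0 := by
    refine (injective_iff_map_eq_zero _).mp (hΨ I) _ ?_
    rw [← LinearMap.comp_apply, lTensor_comp_rTensor, ← rTensor_comp_lTensor,
      LinearMap.comp_apply, hz, ← LinearMap.comp_apply, ← rTensor_comp,
      (exact_subtype_mkQ I).linearMap_comp_eq_zero, rTensor_zero, LinearMap.zero_apply]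
  obtain ⟨w, hw⟩ := (_root_.rTensor_exact F (exact_subtype_mkQ I) I.mkQ_surjective z).mp hz_mod
  have hwy : lTensor I Ψ w = y := by
    apply Module.Flat.rTensor_preserves_injective_linearMap (M := G) I.subtype
      Subtype.val_injective
    rw [← LinearMap.comp_apply, rTensor_comp_lTensor, ← lTensor_comp_rTensor,
      LinearMap.comp_apply, hw, hz]
  rw [← hwy, ← LinearMap.comp_apply, ← lTensor_comp, hexact.linearMap_comp_eq_zero, lTensor_zero,
    LinearMap.zero_apply]

end Flat

section BaseChange

variable {R : Type*} [CommRing R] {S : Type*}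

variable (R) in
/-- By definition `psiMap R S Ψ` is `psiMapModule R R Ψ`. -/
noncomputable def psiMapModule (N : Type*) [AddCommGroup N] [Module R N] (Ψ : S → R) :
    (S →₀ N) →ₗ[R] N × (S →₀ N) :=
  Finsupp.lsum R fun s => LinearMap.prod LinearMap.id (Ψ s • Finsupp.lsingle s)

section psiMapModule

variable {N : Type*} [AddCommGroup N] [Module R N] (Ψ : S → R)

@[simp]
lemma psiMapModule_single (s : S) (n : N) :
    psiMapModule R N Ψ (Finsupp.single s n) = (n, Finsupp.single s (Ψ s • n)) := by
  simp [psiMapModule]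

lemma psiMapModule_fst (g : S →₀ N) : (psiMapModule R N Ψ g).1 = g.sum fun _ n => n := by
  induction g using Finsupp.induction_linear with
  | zero => simp
  | add a b ha hb => rw [map_add, Prod.fst_add, ha, hb, Finsupp.sum_add_index' (by simp) (by simp)]
  | single s n => simp

lemma psiMapModule_snd_apply (g : S →₀ N) (t : S) : (psiMapModule R N Ψ g).2 t = Ψ t • g t := by
  classical
  induction g using Finsupp.induction_linear with
  | zero => simp
  | add a b ha hb => simp [ha, hb]
  | single s n => by_cases h : s = t <;> simp [h]

lemma psiMapModule_injective {e : S → R} (he : OrthogonalIdempotents e) :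
    Function.Injective (psiMapModule R N fun s => 1 - e s) := by
  rw [injective_iff_map_eq_zero]
  intro g hg
  have hsum : (g.sum fun _ n => n) = 0 := by
    rw [← psiMapModule_fst (fun s => 1 - e s), hg, Prod.fst_zero]
  have hfix : ∀ s, e s • g s = g s := fun s => by
    have := psiMapModule_snd_apply (fun s => 1 - e s) g s
    rw [hg, Prod.snd_zero, Finsupp.coe_zero, Pi.zero_apply, sub_smul, one_smul] at this
    exact (sub_eq_zero.mp this.symm).symm
  ext t
  calc g t = e t • g.sum fun _ n => n := by
        rw [Finsupp.smul_sum, Finsupp.sum_eq_single t _ (by simp), hfix]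
        intro s _ hst
        rw [← hfix s, smul_smul, he.ortho (Ne.symm hst), zero_smul]
    _ = 0 := by rw [hsum, smul_zero]

end psiMapModule

variable [DecidableEq S]

lemma lTensor_psiMap (N : Type*) [AddCommGroup N] [Module R N] (Ψ : S → R) :
    ((TensorProduct.rid R N).prodCongr (finsuppScalarRight R R N S)).toLinearMap ∘ₗ
        (prodRight R R N R (S →₀ R)).toLinearMap ∘ₗ lTensor N (psiMap R S Ψ) =
      psiMapModule R N Ψ ∘ₗ (finsuppScalarRight R R N S).toLinearMap := by
  refine TensorProduct.ext' fun n x => ?_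
  induction x using Finsupp.induction_linear with
  | zero => simp
  | add a b ha hb => rw [tmul_add, map_add, map_add, ha, hb]
  | single s r =>
    have hsingle : ∀ a : R, finsuppScalarRight R R N S (n ⊗ₜ Finsupp.single s a) =
        Finsupp.single s (a • n) := fun a => by
      simp [finsuppScalarRight_apply_tmul]
    simp [psiMap, hsingle, mul_smul, -Finsupp.single_mul]

lemma lTensor_psiMap_injective {e : S → R} (he : OrthogonalIdempotents e)
    (N : Type*) [AddCommGroup N] [Module R N] :
    Function.Injective (lTensor N (psiMap R S fun s => 1 - e s)) := by
  have h := congrArg DFunLike.coe (lTensor_psiMap N fun s => 1 - e s)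
  simp only [coe_comp, LinearEquiv.coe_coe] at h
  have : Function.Injective (psiMapModule R N (fun s => 1 - e s) ∘ finsuppScalarRight R R N S) :=
    (psiMapModule_injective he).comp (LinearEquiv.injective _)
  rw [← h] at this
  exact this.of_comp.of_comp

end BaseChange

/-- Let `{e s}` be pairwise orthogonal idempotents of `R` and `Ψ s = 1 - e s`.
Then `Ψ_{R,S}` is universally injective: its cokernel is `R`-flat, and for every ring map
`f : R → R'` the base change — which equals `(f ∘ Ψ)_{R',S}` — is injective. -/
theorem stmt5 (R : Type*) [CommRing R] (S : Type*) (e : S → R)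
    (hidem : ∀ s, e s * e s = e s)
    (horth : ∀ s t, s ≠ t → e s * e t = 0) :
    Module.Flat R ((R × (S →₀ R)) ⧸ LinearMap.range (psiMap R S (fun s => 1 - e s))) ∧
    ∀ (R' : Type*) [CommRing R'] (f : R →+* R'),
      Function.Injective (psiMap R' S (fun s => f (1 - e s))) := by
  classical
  have he : OrthogonalIdempotents e := ⟨hidem, fun s t hst => horth s t hst⟩
  refine ⟨Module.Flat.of_exact_of_lTensor_quotient_injective _ _
    (exact_map_mkQ_range _) (Submodule.mkQ_surjective _)
    fun I => lTensor_psiMap_injective he (R ⧸ I), fun R' _ f => ?_⟩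
  simp only [map_sub, map_one]
  exact psiMapModule_injective (he.map f)
end

section
/- Let R be a commutative ring and S a set. Let B(S) be the set of finite subsets of S, which is a commutative idempotent monoid under union with unit ∅. Then the R-algebra R{S} := R[X_s : s ∈ S]/(X_s² − X_s : s ∈ S) is isomorphic to the monoid algebra R[B(S)]. -/
/-- The commutative monoid of finite subsets of `S` under union, with unit `∅`. -/
instance finsetUnionCommMonoid (S : Type*) [DecidableEq S] : CommMonoid (Finset S) where
  mul := (· ∪ ·)
  one := ∅
  mul_assoc := Finset.union_assoc
  one_mul := Finset.empty_union
  mul_one := Finset.union_empty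
  mul_comm := Finset.union_comm

/-- `R{S} = R[X_s : s ∈ S] / (X_s² - X_s)`. -/
abbrev RBrace (R S : Type*) [CommRing R] : Type _ :=
  MvPolynomial S R ⧸
    (Ideal.span (Set.range fun s : S =>
      (MvPolynomial.X s * MvPolynomial.X s - MvPolynomial.X s : MvPolynomial S R)))

/-!
Both algebras are the free commutative `R`-algebra on a family of idempotents indexed by `S`.
In `R{S}` this is the universal property of the quotient. In `R[B(S)]` a family `x` of
commuting idempotents extends to the monoid hom `K ↦ ∏_{s ∈ K} x s` out of `(B(S), ∪)`, because
idempotency makes the product over `K ∪ L` insensitive to the overlap `K ∩ L`. The two lifts of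
the generators are mutually inverse, as both composites fix generators.
-/

open MvPolynomial

section UnionProd

variable {M S : Type*} [CommMonoid M] [DecidableEq S]

theorem Finset.prod_union_of_isIdempotentElem {x : S → M} (hx : ∀ s, IsIdempotentElem (x s))
    (K L : Finset S) : ∏ s ∈ K ∪ L, x s = (∏ s ∈ K, x s) * ∏ s ∈ L, x s := by
  have absorb : (∏ s ∈ K ∪ L, x s) * ∏ s ∈ K ∩ L, x s = ∏ s ∈ K ∪ L, x s := by
    rw [← Finset.prod_sdiff Finset.inter_subset_union, mul_assoc, ← Finset.prod_mul_distrib]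
    simp only [fun s => (hx s).eq]
  rw [← Finset.prod_union_inter, absorb]

def unionProdHom (x : S → M) (hx : ∀ s, IsIdempotentElem (x s)) : Finset S →* M where
  toFun K := ∏ s ∈ K, x s
  map_one' := Finset.prod_empty
  map_mul' := Finset.prod_union_of_isIdempotentElem hx

@[simp]
theorem unionProdHom_apply (x : S → M) (hx : ∀ s, IsIdempotentElem (x s)) (K : Finset S) :
    unionProdHom x hx K = ∏ s ∈ K, x s :=
  rfl

theorem Finset.prod_singleton_eq_self (K : Finset S) : ∏ s ∈ K, ({s} : Finset S) = K := by
  induction K using Finset.induction_on with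
  | empty => rfl
  | insert a K _ ih =>
    rw [Finset.prod_insert ‹_›, ih]
    exact (Finset.insert_eq a K).symm

end UnionProd

theorem MonoidAlgebra.isIdempotentElem_single_singleton (R : Type*) {S : Type*} [Semiring R]
    [DecidableEq S] (s : S) : IsIdempotentElem (single ({s} : Finset S) (1 : R)) := by
  rw [IsIdempotentElem, single_mul_single, mul_one]
  exact congrArg (single · 1) (Finset.union_self {s})

namespace RBrace

variable {R S A : Type*} [CommRing R] [CommRing A] [Algebra R A]

theorem isIdempotentElem_mk_X (s : S) :
    IsIdempotentElem (Ideal.Quotient.mk _ (X s) : RBrace R S) := by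
  rw [IsIdempotentElem, ← map_mul, Ideal.Quotient.eq]
  exact Ideal.subset_span ⟨s, rfl⟩

noncomputable def liftₐ (x : S → A) (hx : ∀ s, IsIdempotentElem (x s)) : RBrace R S →ₐ[R] A :=
  Ideal.Quotient.liftₐ _ (aeval x) fun _ hp => RingHom.mem_ker.1 <| by
    refine (Ideal.span_le (I := RingHom.ker (aeval x : MvPolynomial S R →ₐ[R] A))).2 ?_ hp
    rintro _ ⟨s, rfl⟩
    simp [(hx s).eq]

@[simp]
theorem liftₐ_mk_X (x : S → A) (hx : ∀ s, IsIdempotentElem (x s)) (s : S) :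
    liftₐ x hx (Ideal.Quotient.mk _ (X s) : RBrace R S) = x s :=
  aeval_X x s

variable (R S) [DecidableEq S]

noncomputable def equivMonoidAlgebra : RBrace R S ≃ₐ[R] MonoidAlgebra R (Finset S) :=
  AlgEquiv.ofAlgHom
    (liftₐ (fun s => MonoidAlgebra.single {s} 1)
      (MonoidAlgebra.isIdempotentElem_single_singleton R))
    (MonoidAlgebra.lift R _ _ (unionProdHom _ isIdempotentElem_mk_X))
    (MonoidAlgebra.algHom_ext (fun K => by
        simp [MonoidAlgebra.lift_single, Finset.prod_singleton_eq_self])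
      (Subsingleton.elim _ _))
    (Ideal.Quotient.algHom_ext _ <| MvPolynomial.algHom_ext fun s => by
      simp [MonoidAlgebra.lift_single])

theorem equivMonoidAlgebra_mk_X (s : S) :
    equivMonoidAlgebra R S (Ideal.Quotient.mk _ (X s)) = MonoidAlgebra.single {s} 1 :=
  liftₐ_mk_X _ (MonoidAlgebra.isIdempotentElem_single_singleton R) s

end RBrace

/-- `R{S}` is isomorphic, as an `R`-algebra, to the monoid algebra
`R[B(S)]` on the monoid `B(S)` of finite subsets of `S` under union, via `X_s ↦ [{s}]`. -/
theorem stmt8 (R S : Type*) [CommRing R] [DecidableEq S] :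
    ∃ e : RBrace R S ≃ₐ[R] MonoidAlgebra R (Finset S),
      ∀ s : S, e (Ideal.Quotient.mk _ (MvPolynomial.X s))
        = MonoidAlgebra.single ({s} : Finset S) 1 :=
  ⟨RBrace.equivMonoidAlgebra R S, RBrace.equivMonoidAlgebra_mk_X R S⟩
end

section
/- A p-boolean ring is a commutative ring R of characteristic p such that r^p = r for all r ∈ R. There exists a p-boolean ring R₀ of countable cardinality containing a countably infinite family of pairwise orthogonal idempotents. Concretely, in R₀ = 𝔽_p[X₁,X₂,...]/(X_i^p − X_i : i ∈ ℕ), the elements a_n = (1 − X_n^{p−1}) ∏_{0≤i≤n−1} X_i^{p−1} are pairwise orthogonal idempotents, and a_n ≠ a_m for n ≠ m. -/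
open MvPolynomial

/-- `R₀ = 𝔽_p[X₁, X₂, ...] / (Xᵢᵖ - Xᵢ)`. -/
abbrev pBoolFree (p : ℕ) : Type :=
  MvPolynomial ℕ (ZMod p) ⧸
    (Ideal.span (Set.range fun i : ℕ => (X i ^ p - X i : MvPolynomial ℕ (ZMod p))))

/-- The orthogonal idempotents `aₙ = (1 - Xₙ^{p-1}) ∏_{i < n} Xᵢ^{p-1}` in `R₀`. -/
noncomputable def pBoolIdem (p : ℕ) (n : ℕ) : pBoolFree p :=
  Ideal.Quotient.mk _
    ((1 - X n ^ (p - 1)) * ∏ i ∈ Finset.range n, X i ^ (p - 1))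

/-!
Write `e i` for the image of `X i ^ (p - 1)`. Since `X i ^ p = X i`, each `e i` is idempotent,
and `aₙ = (1 - e n) ∏_{i<n} e i` are then pairwise orthogonal for purely formal reasons: for
`n < m` the product `aₙ aₘ` contains the factor `(1 - e n) e n = 0`. They are nonzero (hence
distinct) because evaluating at the point with `Xₙ = 0` and all other coordinates `1` sends `aₙ`
to `1`. Finally `r ↦ r ^ p` is a ring endomorphism in characteristic `p` that fixes the
generators `C a` and `X i`, so it is the identity.
-/

instance MvPolynomial.countable {σ R : Type*} [CommSemiring R] [Countable σ] [Countable R] :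
    Countable (MvPolynomial σ R) :=
  AddMonoidAlgebra.coeff_injective.countable

theorem IsIdempotentElem.pow_pred_of_pow_eq_self {M : Type*} [Monoid M] {x : M} {n : ℕ}
    (hx : x ^ n = x) : IsIdempotentElem (x ^ (n - 1)) := by
  rcases n with _ | _ | k
  any_goals simpa using IsIdempotentElem.one
  change x ^ (k + 1) * x ^ (k + 1) = x ^ (k + 1)
  rw [← pow_add, show k + 1 + (k + 1) = k + 2 + k by omega, pow_add, hx, ← pow_succ']

theorem orthogonalIdempotents_one_sub_mul_prod_range {R : Type*} [CommRing R] {e : ℕ → R}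
    (he : ∀ i, IsIdempotentElem (e i)) :
    OrthogonalIdempotents fun n => (1 - e n) * ∏ i ∈ Finset.range n, e i where
  idem n := (he n).one_sub.mul <| Finset.prod_induction _ _ (fun _ _ => .mul) .one fun i _ => he i
  ortho := by
    suffices h : ∀ n m, n < m →
        ((1 - e n) * ∏ i ∈ Finset.range n, e i) * ((1 - e m) * ∏ i ∈ Finset.range m, e i) = 0 by
      intro n m hnm
      rcases hnm.lt_or_gt with hlt | hgt
      · exact h n m hlt
      · rw [mul_comm]
        exact h m n hgt
    intro n m hnm
    rw [← Finset.mul_prod_erase _ _ (Finset.mem_range.2 hnm)]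
    linear_combination ((∏ i ∈ Finset.range n, e i) * (1 - e m) *
      ∏ i ∈ (Finset.range m).erase n, e i) * (he n).one_sub_mul_self

theorem OrthogonalIdempotents.injective_of_ne_zero {R I : Type*} [Semiring R] {e : I → R}
    (he : OrthogonalIdempotents e) (hne : ∀ i, e i ≠ 0) : Function.Injective e := by
  intro i j hij
  by_contra hij'
  apply hne i
  rw [← (he.idem i).eq]
  nth_rw 2 [hij]
  exact he.ortho hij'

section QuotientPowSubX

variable {σ R : Type*} [CommRing R] {q : ℕ}

variable (σ R q) in
noncomputable abbrev powSubXIdeal : Ideal (MvPolynomial σ R) :=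
  Ideal.span (Set.range fun i : σ => (X i ^ q - X i : MvPolynomial σ R))

theorem mk_X_pow_eq_mk_X (i : σ) :
    Ideal.Quotient.mk (powSubXIdeal σ R q) (X i) ^ q = Ideal.Quotient.mk _ (X i) := by
  rw [← map_pow, Ideal.Quotient.eq]
  exact Ideal.subset_span ⟨i, rfl⟩

noncomputable def quotientEval (x : σ → R) (hx : ∀ i, x i ^ q = x i) :
    MvPolynomial σ R ⧸ powSubXIdeal σ R q →+* R :=
  Ideal.Quotient.lift _ (eval x) fun _ hf => RingHom.mem_ker.1 <|
    Ideal.span_le.2 (Set.range_subset_iff.2 fun i => by simp [hx]) hf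

@[simp]
theorem quotientEval_mk (x : σ → R) (hx : ∀ i, x i ^ q = x i) (f : MvPolynomial σ R) :
    quotientEval x hx (Ideal.Quotient.mk _ f) = eval x f :=
  Ideal.Quotient.lift_mk _ _ _

theorem pow_eq_self_of_quotient [ExpChar (MvPolynomial σ R ⧸ powSubXIdeal σ R q) q]
    (hR : ∀ a : R, a ^ q = a) (r : MvPolynomial σ R ⧸ powSubXIdeal σ R q) : r ^ q = r := by
  have hfrob : frobenius (MvPolynomial σ R ⧸ powSubXIdeal σ R q) q = RingHom.id _ :=
    Ideal.Quotient.ringHom_ext <| ringHom_ext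
      (fun a => by simp [frobenius_def, ← map_pow, hR])
      (fun i => by simp [frobenius_def, mk_X_pow_eq_mk_X])
  exact RingHom.congr_fun hfrob r

end QuotientPowSubX

section pBoolFree

variable (p : ℕ) [Fact p.Prime]

instance pBoolFree.nontrivial : Nontrivial (pBoolFree p) :=
  (quotientEval (fun _ => 0) fun _ => zero_pow (Fact.out : p.Prime).ne_zero).domain_nontrivial

instance pBoolFree.charP : CharP (pBoolFree p) p :=
  charP_of_injective_algebraMap (algebraMap (ZMod p) _).injective p

theorem pBoolIdem_eq (n : ℕ) :
    pBoolIdem p n = (1 - Ideal.Quotient.mk _ (X n) ^ (p - 1)) *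
      ∏ i ∈ Finset.range n, Ideal.Quotient.mk _ (X i) ^ (p - 1) := by
  simp [pBoolIdem, map_prod]

theorem orthogonalIdempotents_pBoolIdem : OrthogonalIdempotents (pBoolIdem p) := by
  rw [show pBoolIdem p = _ from funext (pBoolIdem_eq p)]
  exact orthogonalIdempotents_one_sub_mul_prod_range fun i =>
    .pow_pred_of_pow_eq_self (mk_X_pow_eq_mk_X i)

theorem pBoolIdem_ne_zero (n : ℕ) : pBoolIdem p n ≠ 0 := by
  have hp : p - 1 ≠ 0 := by have := (Fact.out : p.Prime).two_le; omega
  let x : ℕ → ZMod p := fun i => if i = n then 0 else 1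
  have hx : ∀ i, x i ^ p = x i := fun i => ZMod.pow_card _
  have heval : quotientEval x hx (pBoolIdem p n) = 1 := by
    rw [pBoolIdem, quotientEval_mk]
    simp only [x, map_mul, map_sub, map_one, map_pow, map_prod, eval_X, if_true, zero_pow hp,
      sub_zero, one_mul]
    exact Finset.prod_eq_one fun i hi => by simp [(Finset.mem_range.1 hi).ne]
  intro h
  simp [h] at heval

end pBoolFree

/-- `R₀ = 𝔽_p[X₁,X₂,...]/(Xᵢᵖ - Xᵢ)` is a countable `p`-boolean ring
(characteristic `p` and `r^p = r` for all `r`), and the elements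
`aₙ = (1 - Xₙ^{p-1}) ∏_{i<n} Xᵢ^{p-1}` form a countably infinite family of pairwise
orthogonal idempotents, with `aₙ ≠ aₘ` for `n ≠ m`. -/
theorem stmt14 (p : ℕ) [Fact p.Prime] :
    CharP (pBoolFree p) p ∧
    (∀ r : pBoolFree p, r ^ p = r) ∧
    Countable (pBoolFree p) ∧
    (∀ n, pBoolIdem p n * pBoolIdem p n = pBoolIdem p n) ∧
    (∀ n m, n ≠ m → pBoolIdem p n * pBoolIdem p m = 0) ∧
    Function.Injective (pBoolIdem p) :=
  ⟨pBoolFree.charP p, pow_eq_self_of_quotient ZMod.pow_card,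
    Ideal.Quotient.mk_surjective.countable, (orthogonalIdempotents_pBoolIdem p).idem,
    fun _ _ hnm => (orthogonalIdempotents_pBoolIdem p).ortho hnm,
    (orthogonalIdempotents_pBoolIdem p).injective_of_ne_zero (pBoolIdem_ne_zero p)⟩
end
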